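/- Let φ be a CNF with m clauses where every clause has at most M literals. Then there is a resolution refutation of Z(φ) of size O(m · M²). In particular, Z(φ) always has a polynomial-size resolution refutation. -/

import Mathlib

/-- Variables of `Z(φ)`: original variables, control variables `y_i`, chain variables `z_j`. -/
abbrev ZVar (X : Type) (m : ℕ) := X ⊕ (Fin m ⊕ Fin (m + 1))

def yVar {X : Type} {m : ℕ} (i : Fin m) : ZVar X m := Sum.inr (Sum.inl i)
def zVar {X : Type} {m : ℕ} (j : Fin (m + 1)) : ZVar X m := Sum.inr (Sum.inr j)

/-- Lift a clause (finset of literals) over `X` to a clause over `ZVar X m`. -/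
def liftClauseF {X : Type} [DecidableEq X] {m : ℕ} (C : Finset (X × Bool)) :
    Finset (ZVar X m × Bool) :=
  C.image (fun l => (Sum.inl l.1, l.2))

/-- The clauses of the lifted CNF `Z(φ)`. -/
def IsZClause {X : Type} [DecidableEq X] {m : ℕ} (φ : Fin m → Finset (X × Bool))
    (C : Finset (ZVar X m × Bool)) : Prop :=
  (∃ i, C = liftClauseF (φ i) ∪ {(yVar i, true)}) ∨
  (∃ i, ∃ l ∈ liftClauseF (φ i) ∪ {(yVar i, true)},
      C = {(l.1, !l.2), (zVar i.castSucc, false), (zVar i.succ, true)}) ∨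
  C = {(zVar (0 : Fin (m + 1)), true)} ∨
  C = {(zVar (Fin.last m), false)}

/-- A resolution refutation from an axiom set `Ax`: a sequence of clauses, each an
axiom or a resolvent of two earlier clauses, ending in the empty clause.
Its size is the length of the sequence. -/
def IsResRefutation {V : Type} [DecidableEq V] (Ax : Finset (V × Bool) → Prop)
    (L : List (Finset (V × Bool))) : Prop :=
  L.getLast? = some ∅ ∧
  ∀ (k : ℕ) (hk : k < L.length),
    Ax (L.get ⟨k, hk⟩) ∨
    ∃ (i j : ℕ) (hi : i < k) (hj : j < k) (x : V) (C D : Finset (V × Bool)),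
      L.get ⟨i, hi.trans hk⟩ = insert (x, true) C ∧
      L.get ⟨j, hj.trans hk⟩ = insert (x, false) D ∧
      L.get ⟨k, hk⟩ = C ∪ D

/-!
`Z(φ)` is refuted along its chain: `z₁` is an axiom, and from `z_i` one derives `z_{i+1}` by
first deriving the chain clause `¬z_i ∨ z_{i+1}`. For that, resolve `C_i ∨ y_i` against
`¬y_i ∨ ¬z_i ∨ z_{i+1}` and then remove the at most `M` literals of `C_i` one at a time by
resolving with the clauses `¬λ ∨ ¬z_i ∨ z_{i+1}`. Each link costs `O(M)` clauses, so the
refutation has `O(m · M)` clauses.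
-/

namespace Resolution

variable {V : Type} [DecidableEq V] {Ax : Finset (V × Bool) → Prop}

def IsDerivation (Ax : Finset (V × Bool) → Prop) (L : List (Finset (V × Bool))) : Prop :=
  ∀ (k : ℕ) (C : Finset (V × Bool)), L[k]? = some C →
    Ax C ∨ ∃ i < k, ∃ j < k, ∃ (x : V) (C₁ C₂ : Finset (V × Bool)),
      L[i]? = some (insert (x, true) C₁) ∧ L[j]? = some (insert (x, false) C₂) ∧ C = C₁ ∪ C₂

def Derivable (Ax : Finset (V × Bool) → Prop) (n : ℕ) (C : Finset (V × Bool)) : Prop :=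
  ∃ L, IsDerivation Ax L ∧ L.getLast? = some C ∧ L.length ≤ n

theorem _root_.List.getElem?_append_of_getElem?_eq_some {α : Type*} {L L' : List α} {i : ℕ}
    {a : α} (h : L[i]? = some a) : (L ++ L')[i]? = some a := by
  rw [List.getElem?_append_left (List.getElem?_eq_some_iff.1 h).1, h]

theorem _root_.List.getElem?_append_length_add {α : Type*} (L L' : List α) (i : ℕ) :
    (L ++ L')[L.length + i]? = L'[i]? := by
  rw [List.getElem?_append_right (by omega), Nat.add_sub_cancel_left]

theorem IsDerivation.append {L₁ L₂ : List (Finset (V × Bool))} (h₁ : IsDerivation Ax L₁)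
    (h₂ : IsDerivation Ax L₂) : IsDerivation Ax (L₁ ++ L₂) := by
  intro k C hC
  rcases lt_or_ge k L₁.length with hk | hk
  · rw [List.getElem?_append_left hk] at hC
    rcases h₁ k C hC with hax | ⟨i, hi, j, hj, x, C₁, C₂, e₁, e₂, rfl⟩
    · exact .inl hax
    · exact .inr ⟨i, hi, j, hj, x, C₁, C₂, List.getElem?_append_of_getElem?_eq_some e₁,
        List.getElem?_append_of_getElem?_eq_some e₂, rfl⟩
  · obtain ⟨k, rfl⟩ := Nat.exists_eq_add_of_le hk
    rw [List.getElem?_append_length_add] at hC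
    rcases h₂ k C hC with hax | ⟨i, hi, j, hj, x, C₁, C₂, e₁, e₂, rfl⟩
    · exact .inl hax
    · exact .inr ⟨L₁.length + i, by omega, L₁.length + j, by omega, x, C₁, C₂,
        by rwa [List.getElem?_append_length_add], by rwa [List.getElem?_append_length_add], rfl⟩

theorem IsDerivation.concat_resolvent {L : List (Finset (V × Bool))} (hL : IsDerivation Ax L)
    {i j : ℕ} {x : V} {C₁ C₂ : Finset (V × Bool)} (hi : L[i]? = some (insert (x, true) C₁))
    (hj : L[j]? = some (insert (x, false) C₂)) : IsDerivation Ax (L ++ [C₁ ∪ C₂]) := by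
  intro k C hC
  rcases lt_or_ge k L.length with hk | hk
  · rw [List.getElem?_append_left hk] at hC
    rcases hL k C hC with hax | ⟨i', hi', j', hj', x', C₁', C₂', e₁, e₂, rfl⟩
    · exact .inl hax
    · exact .inr ⟨i', hi', j', hj', x', C₁', C₂', List.getElem?_append_of_getElem?_eq_some e₁,
        List.getElem?_append_of_getElem?_eq_some e₂, rfl⟩
  · obtain ⟨k, rfl⟩ := Nat.exists_eq_add_of_le hk
    rw [List.getElem?_append_length_add] at hC
    rcases k with _ | k
    · obtain rfl : C₁ ∪ C₂ = C := by simpa using hC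
      exact .inr ⟨i, (List.getElem?_eq_some_iff.1 hi).1, j, (List.getElem?_eq_some_iff.1 hj).1,
        x, C₁, C₂, List.getElem?_append_of_getElem?_eq_some hi,
        List.getElem?_append_of_getElem?_eq_some hj, rfl⟩
    · simp at hC

theorem Derivable.mono {n n' : ℕ} {C : Finset (V × Bool)} (h : Derivable Ax n C) (hn : n ≤ n') :
    Derivable Ax n' C :=
  let ⟨L, hL, hlast, hlen⟩ := h
  ⟨L, hL, hlast, hlen.trans hn⟩

theorem Derivable.of_ax {C : Finset (V × Bool)} (h : Ax C) : Derivable Ax 1 C := by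
  refine ⟨[C], fun k C' hC' => .inl ?_, rfl, le_rfl⟩
  rcases k with _ | k
  · simpa [← Option.some_inj.1 hC'] using h
  · simp at hC'

theorem Derivable.resolve {a b : ℕ} {x : V} {C₁ C₂ : Finset (V × Bool)}
    (h₁ : Derivable Ax a (insert (x, true) C₁)) (h₂ : Derivable Ax b (insert (x, false) C₂)) :
    Derivable Ax (a + b + 1) (C₁ ∪ C₂) := by
  obtain ⟨L₁, hL₁, hlast₁, hlen₁⟩ := h₁
  obtain ⟨L₂, hL₂, hlast₂, hlen₂⟩ := h₂
  have hi : (L₁ ++ L₂)[L₁.length - 1]? = some (insert (x, true) C₁) :=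
    List.getElem?_append_of_getElem?_eq_some (List.getLast?_eq_getElem? ▸ hlast₁)
  have hj : (L₁ ++ L₂)[L₁.length + (L₂.length - 1)]? = some (insert (x, false) C₂) := by
    rwa [List.getElem?_append_length_add, ← List.getLast?_eq_getElem?]
  exact ⟨_, (hL₁.append hL₂).concat_resolvent hi hj, List.getLast?_concat, by simp; omega⟩

theorem Derivable.resolve_literal {a b : ℕ} {l : V × Bool} {C₁ C₂ : Finset (V × Bool)}
    (h₁ : Derivable Ax a (insert l C₁)) (h₂ : Derivable Ax b (insert (l.1, !l.2) C₂)) :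
    Derivable Ax (a + b + 1) (C₁ ∪ C₂) := by
  obtain ⟨x, _ | _⟩ := l
  · rw [Finset.union_comm, add_comm a]
    exact h₂.resolve h₁
  · exact h₁.resolve h₂

theorem Derivable.resolve_away {n : ℕ} {S T : Finset (V × Bool)}
    (hS : ∀ l ∈ S, Ax (insert (l.1, !l.2) T)) (h : Derivable Ax n (S ∪ T)) :
    Derivable Ax (n + 2 * S.card) T := by
  induction S using Finset.induction_on generalizing n with
  | empty => simpa using h
  | insert l S hl ih =>
    rw [Finset.insert_union] at h
    have h' : Derivable Ax (n + 2) (S ∪ T) := by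
      simpa [Finset.union_assoc] using
        h.resolve_literal (.of_ax (hS l (Finset.mem_insert_self l S)))
    simpa [Finset.card_insert_of_notMem hl, mul_add, add_assoc, add_comm 2] using
      ih (fun l' hl' => hS l' (Finset.mem_insert_of_mem hl')) h'

theorem Derivable.exists_isResRefutation {n : ℕ} (h : Derivable Ax n ∅) :
    ∃ L, IsResRefutation Ax L ∧ L.length ≤ n := by
  obtain ⟨L, hL, hlast, hlen⟩ := h
  refine ⟨L, ⟨hlast, fun k hk => ?_⟩, hlen⟩
  simp only [List.get_eq_getElem]
  rcases hL k L[k] (List.getElem?_eq_getElem hk) with hax | ⟨i, hi, j, hj, x, C₁, C₂, e₁, e₂, e⟩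
  · exact .inl hax
  · rw [List.getElem?_eq_getElem (hi.trans hk), Option.some_inj] at e₁
    rw [List.getElem?_eq_getElem (hj.trans hk), Option.some_inj] at e₂
    exact .inr ⟨i, j, hi, hj, x, C₁, C₂, e₁, e₂, e⟩

end Resolution

open Resolution

section

variable {X : Type} [DecidableEq X] {m : ℕ} (φ : Fin m → Finset (X × Bool))

def chainClause (i : Fin m) : Finset (ZVar X m × Bool) :=
  {(zVar i.castSucc, false), (zVar i.succ, true)}

theorem derivable_chainClause {M : ℕ} {i : Fin m} (hM : (φ i).card ≤ M) :
    Derivable (IsZClause φ) (2 * M + 3) (chainClause i) := by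
  have hax : ∀ l ∈ liftClauseF (φ i) ∪ {(yVar i, true)},
      IsZClause φ (insert (l.1, !l.2) (chainClause i)) :=
    fun l hl => .inr (.inl ⟨i, l, hl, rfl⟩)
  have hy : Derivable (IsZClause φ) 3 (liftClauseF (φ i) ∪ chainClause i) := by
    have hC : Derivable (IsZClause φ) 1 (insert (yVar i, true) (liftClauseF (φ i))) := by
      simpa [Finset.union_comm, ← Finset.insert_eq] using
        Derivable.of_ax (Ax := IsZClause φ) (.inl ⟨i, rfl⟩)
    exact hC.resolve_literal (.of_ax (hax _ (by simp)))
  refine (hy.resolve_away fun l hl => hax l (Finset.mem_union_left _ hl)).mono ?_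
  have : (liftClauseF (φ i) : Finset (ZVar X m × Bool)).card ≤ M := Finset.card_image_le.trans hM
  omega

theorem derivable_zVar {M : ℕ} (hM : ∀ i, (φ i).card ≤ M) (j : Fin (m + 1)) :
    Derivable (IsZClause φ) (1 + j * (2 * M + 4)) {(zVar j, true)} := by
  induction j using Fin.induction with
  | zero => simpa using Derivable.of_ax (Ax := IsZClause φ) (.inr (.inr (.inl rfl)))
  | succ i ih =>
    have step := ih.resolve (C₁ := ∅) (derivable_chainClause φ (hM i))
    rw [Finset.empty_union] at step
    refine step.mono (le_of_eq ?_)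
    rw [Fin.val_succ, Fin.val_castSucc]
    ring

theorem derivable_empty {M : ℕ} (hM : ∀ i, (φ i).card ≤ M) :
    Derivable (IsZClause φ) (m * (2 * M + 4) + 3) ∅ := by
  have hlast := (derivable_zVar φ hM (Fin.last m)).resolve (C₁ := ∅) (C₂ := ∅)
    (.of_ax (.inr (.inr (.inr rfl))))
  rw [Finset.union_empty, Fin.val_last] at hlast
  exact hlast.mono (by omega)

end

/-- if `φ` has `m` clauses, each with at most `M` literals, then `Z(φ)`
has a resolution refutation of size `O(m · M²)`. -/
theorem zClauses_resolution_refutation :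
    ∃ c : ℕ, ∀ (X : Type) [DecidableEq X] (m M : ℕ) (φ : Fin m → Finset (X × Bool)),
      (∀ i, (φ i).card ≤ M) →
      ∃ L : List (Finset (ZVar X m × Bool)),
        IsResRefutation (IsZClause φ) L ∧ L.length ≤ c * (m + 1) * (M + 1) ^ 2 := by
  refine ⟨4, fun X _ m M φ hM => ?_⟩
  obtain ⟨L, hL, hlen⟩ := (derivable_empty φ hM).exists_isResRefutation
  refine ⟨L, hL, hlen.trans ?_⟩
  nlinarith [Nat.le_self_pow two_ne_zero (M + 1)]
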